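/- Let m > 0, V > 0, ω(k) = √(‖k‖² + m²), and let ψ ∈ L²(ℝ³; ℂ) be such that the function k ↦ ω(k)·ψ(k) is also in L²(ℝ³; ℂ). Then the function k ↦ (ω(q_V(k)) − ω(k))·ψ(k) is in L²(ℝ³; ℂ) and its L² norm is at most (√3·π/(V·m)) times the L² norm of ω·ψ; in particular, for fixed ψ this norm tends to 0 as V → ∞. -/

import Mathlib

open MeasureTheory

/-- The nearest lattice point `q_V(k)` of the momentum lattice `Γ_V`, defined
componentwise by `q_V(k)_j = (2π/V)·⌊V·k_j/(2π) + 1/2⌋`. -/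
noncomputable def qV (V : ℝ) (k : EuclideanSpace ℝ (Fin 3)) :
    EuclideanSpace ℝ (Fin 3) :=
  WithLp.toLp 2 (fun j => (2 * Real.pi / V) * (⌊V * k j / (2 * Real.pi) + 1 / 2⌋ : ℤ))

/-- The Klein–Gordon one-particle energy `ω(k) = √(‖k‖² + m²)`. -/
noncomputable def omegaKG (m : ℝ) (k : EuclideanSpace ℝ (Fin 3)) : ℝ :=
  Real.sqrt (‖k‖ ^ 2 + m ^ 2)

/-!
`ω(k)` is the Euclidean norm of `(k, m)` in `ℝ³ × ℝ`, hence `ω` is `1`-Lipschitz, and rounding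
moves each coordinate of `k` by at most `π / V`, so `‖q_V(k) - k‖ ≤ √3 π / V`. Together with
`m ≤ ω(k)` this gives the pointwise multiplier bound `|ω(q_V(k)) - ω(k)| ≤ (√3 π / (V m)) ω(k)`,
which transfers to `L²` norms; the limit `V → ∞` is read off from the bound.
-/

open Filter Topology

theorem WithLp.isometry_toLp_prod_const {E F : Type*} [SeminormedAddCommGroup E]
    [SeminormedAddCommGroup F] (c : F) : Isometry fun x : E => WithLp.toLp 2 (x, c) :=
  Isometry.of_dist_eq fun x y => by simp [WithLp.prod_dist_eq_of_L2]

theorem omegaKG_eq_norm (m : ℝ) (k : EuclideanSpace ℝ (Fin 3)) :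
    omegaKG m k = ‖WithLp.toLp 2 (k, m)‖ := by
  simp [omegaKG, WithLp.prod_norm_eq_of_L2]

theorem lipschitzWith_omegaKG (m : ℝ) : LipschitzWith 1 (omegaKG m) := by
  refine LipschitzWith.of_dist_le_mul fun x y => ?_
  rw [NNReal.coe_one, one_mul, omegaKG_eq_norm, omegaKG_eq_norm,
    ← (WithLp.isometry_toLp_prod_const (E := EuclideanSpace ℝ (Fin 3)) m).dist_eq]
  exact dist_norm_norm_le _ _

theorem le_omegaKG (m : ℝ) (k : EuclideanSpace ℝ (Fin 3)) : m ≤ omegaKG m k :=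
  Real.le_sqrt_of_sq_le (by nlinarith [sq_nonneg ‖k‖])

theorem abs_mul_round_div_sub_le {α : Type*} [Field α] [LinearOrder α] [IsStrictOrderedRing α]
    [FloorRing α] {a : α} (ha : 0 < a) (x : α) : |a * round (x / a) - x| ≤ a / 2 := by
  have hx : a * round (x / a) - x = -(a * (x / a - round (x / a))) := by field_simp; ring
  rw [hx, abs_neg, abs_mul, abs_of_pos ha]
  have := abs_sub_round (x / a)
  calc a * |x / a - round (x / a)| ≤ a * (1 / 2) := by gcongr
    _ = a / 2 := by ring

theorem qV_apply (V : ℝ) (k : EuclideanSpace ℝ (Fin 3)) (j : Fin 3) :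
    qV V k j = 2 * Real.pi / V * round (k j / (2 * Real.pi / V)) := by
  rw [round_eq, div_div_eq_mul_div, mul_comm (k j)]
  rfl

theorem EuclideanSpace.norm_le_sqrt_card_mul {𝕜 ι : Type*} [RCLike 𝕜] [Fintype ι]
    {x : EuclideanSpace 𝕜 ι} {r : ℝ} (hr : 0 ≤ r) (h : ∀ i, ‖x i‖ ≤ r) :
    ‖x‖ ≤ √(Fintype.card ι) * r := by
  calc ‖x‖ = √(∑ i, ‖x i‖ ^ 2) := EuclideanSpace.norm_eq x
    _ ≤ √(∑ _i : ι, r ^ 2) := by gcongr with i; exact h i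
    _ = √(Fintype.card ι) * r := by simp [Real.sqrt_mul, Real.sqrt_sq hr]

theorem measurable_qV (V : ℝ) : Measurable (qV V) := by
  unfold qV
  fun_prop

theorem norm_qV_sub_le {V : ℝ} (hV : 0 < V) (k : EuclideanSpace ℝ (Fin 3)) :
    ‖qV V k - k‖ ≤ √3 * Real.pi / V := by
  have hcomp : ∀ j, ‖(qV V k - k) j‖ ≤ Real.pi / V := fun j => by
    simpa [qV_apply, Real.norm_eq_abs, mul_div_assoc] using
      abs_mul_round_div_sub_le (by positivity : 0 < 2 * Real.pi / V) (k j)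
  simpa [mul_div_assoc] using
    EuclideanSpace.norm_le_sqrt_card_mul (by positivity) hcomp

theorem abs_omegaKG_qV_sub_le {m V : ℝ} (hm : 0 < m) (hV : 0 < V)
    (k : EuclideanSpace ℝ (Fin 3)) :
    |omegaKG m (qV V k) - omegaKG m k| ≤ √3 * Real.pi / (V * m) * omegaKG m k :=
  calc |omegaKG m (qV V k) - omegaKG m k| ≤ ‖qV V k - k‖ := by
        simpa [Real.dist_eq, dist_eq_norm] using (lipschitzWith_omegaKG m).dist_le_mul (qV V k) k
    _ ≤ √3 * Real.pi / V := norm_qV_sub_le hV k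
    _ = √3 * Real.pi / (V * m) * m := by field_simp
    _ ≤ √3 * Real.pi / (V * m) * omegaKG m k := by gcongr; exact le_omegaKG m k

theorem memLp_ofReal_mul_and_eLpNorm_le {α 𝕜 : Type*} [MeasurableSpace α] [RCLike 𝕜]
    {μ : Measure α} {p : ENNReal} {a w : α → ℝ} {ψ : α → 𝕜} {C : ℝ}
    (ha : AEStronglyMeasurable a μ) (hψ : AEStronglyMeasurable ψ μ)
    (hwψ : MemLp (fun x => (w x : 𝕜) * ψ x) p μ) (h : ∀ x, |a x| ≤ C * |w x|) :
    MemLp (fun x => (a x : 𝕜) * ψ x) p μ ∧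
      eLpNorm (fun x => (a x : 𝕜) * ψ x) p μ ≤
        ENNReal.ofReal C * eLpNorm (fun x => (w x : 𝕜) * ψ x) p μ := by
  have hle : ∀ᵐ x ∂μ, ‖(a x : 𝕜) * ψ x‖ ≤ C * ‖(w x : 𝕜) * ψ x‖ :=
    .of_forall fun x => by
      simp only [norm_mul, RCLike.norm_ofReal, ← mul_assoc]
      gcongr
      exact h x
  exact ⟨hwψ.of_le_mul ((RCLike.continuous_ofReal.comp_aestronglyMeasurable ha).mul hψ) hle,
    eLpNorm_le_mul_eLpNorm_of_ae_le_mul hle p⟩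

theorem tendsto_toReal_of_le_ofReal_mul {ι : Type*} {l : Filter ι} {F : ι → ENNReal}
    {g : ι → ℝ} {N : ENNReal} (hN : N ≠ ⊤) (hg : Tendsto g l (𝓝 0))
    (hF : ∀ᶠ i in l, F i ≤ ENNReal.ofReal (g i) * N) :
    Tendsto (fun i => (F i).toReal) l (𝓝 0) := by
  have hgN : Tendsto (fun i => (ENNReal.ofReal (g i)).toReal * N.toReal) l (𝓝 0) := by
    simpa using ((ENNReal.tendsto_toReal ENNReal.ofReal_ne_top).comp
      (ENNReal.tendsto_ofReal hg)).mul_const N.toReal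
  refine squeeze_zero' (.of_forall fun _ => ENNReal.toReal_nonneg) ?_ hgN
  filter_upwards [hF] with i hi
  rw [← ENNReal.toReal_mul]
  exact ENNReal.toReal_mono (ENNReal.mul_ne_top ENNReal.ofReal_ne_top hN) hi

/-- Let `m > 0` and `ψ ∈ L²(ℝ³;ℂ)` with `ω·ψ ∈ L²(ℝ³;ℂ)`.  Then for every
`V > 0` the function `k ↦ (ω(q_V(k)) − ω(k))·ψ(k)` is in `L²(ℝ³;ℂ)` with
`L²`-norm at most `(√3·π/(V·m))` times the `L²`-norm of `ω·ψ`; in particular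
this norm tends to `0` as `V → ∞`. -/
theorem eLpNorm_omegaKG_qV_sub_omegaKG_mul_le (m : ℝ) (hm : 0 < m)
    (ψ : EuclideanSpace ℝ (Fin 3) → ℂ)
    (hψ : MemLp ψ 2 volume)
    (hωψ : MemLp (fun k => (omegaKG m k : ℂ) * ψ k) 2 volume) :
    (∀ V : ℝ, 0 < V →
      MemLp (fun k => ((omegaKG m (qV V k) - omegaKG m k : ℝ) : ℂ) * ψ k) 2 volume ∧
      eLpNorm (fun k => ((omegaKG m (qV V k) - omegaKG m k : ℝ) : ℂ) * ψ k) 2 volume ≤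
        ENNReal.ofReal (Real.sqrt 3 * Real.pi / (V * m)) *
          eLpNorm (fun k => (omegaKG m k : ℂ) * ψ k) 2 volume) ∧
    Filter.Tendsto
      (fun V : ℝ =>
        (eLpNorm (fun k => ((omegaKG m (qV V k) - omegaKG m k : ℝ) : ℂ) * ψ k) 2
          volume).toReal)
      Filter.atTop (nhds 0) := by
  have hω := (lipschitzWith_omegaKG m).continuous
  have bound := fun V (hV : 0 < V) =>
    memLp_ofReal_mul_and_eLpNorm_le (a := fun k => omegaKG m (qV V k) - omegaKG m k)
      (C := √3 * Real.pi / (V * m))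
      ((hω.measurable.comp (measurable_qV V)).sub hω.measurable).aestronglyMeasurable hψ.1 hωψ
      fun k => by
        rw [abs_of_nonneg (Real.sqrt_nonneg _)]
        exact abs_omegaKG_qV_sub_le hm hV k
  refine ⟨bound, tendsto_toReal_of_le_ofReal_mul hωψ.eLpNorm_ne_top ?_
    (eventually_gt_atTop 0 |>.mono fun V hV => (bound V hV).2)⟩
  exact tendsto_const_nhds.div_atTop (tendsto_id.atTop_mul_const hm)
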